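/- arXiv:2411.10797 — 3 statements merged into one kernel-verified Lean document; each statement's English description precedes it below -/
import Mathlib

section
/- Let p ≥ 5 be a prime number. Then there exists a pair (H, G) of groups, both of order 72p, such that H is non-supersolvable, G is supersolvable, and the order sequences of G and H are equal. -/
/-- The order sequence of a finite group `G`: the non-decreasing list formed of the
orders of all the elements of `G`. -/
noncomputable def orderSequence (G : Type*) [Group G] [Fintype G] : List ℕ :=
  ((Finset.univ : Finset G).val.map (fun g => orderOf g)).sort (· ≤ ·)

/-- The multiset of element orders of a finite group `G`. -/
noncomputable def orderMultiset (G : Type*) [Group G] [Fintype G] : Multiset ℕ :=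
  (Finset.univ : Finset G).val.map (fun g => orderOf g)

/-- `Dominates a b`: the sequences `a` and `b` have the same length and `a` is
pointwise `≥ b`, i.e. `a i ≥ b i` for every index `i`. -/
def Dominates (a b : List ℕ) : Prop :=
  List.Forall₂ (· ≥ ·) a b

/-- `ProperlyDominates a b`: `a` dominates `b` and `a ≠ b`. -/
def ProperlyDominates (a b : List ℕ) : Prop :=
  Dominates a b ∧ a ≠ b

/-- A group `G` is supersolvable if there is a chain of subgroups
`⊥ = H 0 ≤ H 1 ≤ … ≤ H k = ⊤` with every `H i` normal in `G` and every successive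
quotient `H (i+1) / H i` cyclic. -/
def IsSupersolvable (G : Type*) [Group G] : Prop :=
  ∃ (k : ℕ) (H : Fin (k + 1) → Subgroup G)
    (_ : ∀ i : Fin k, H i.castSucc ≤ H i.succ)
    (hnorm : ∀ i, (H i).Normal),
    H 0 = ⊥ ∧ H (Fin.last k) = ⊤ ∧
    ∀ i : Fin k,
      letI := (hnorm i.castSucc).subgroupOf (H i.succ)
      IsCyclic ((H i.succ) ⧸ (H i.castSucc).subgroupOf (H i.succ))

/-!
Let `D₄` (of order 8) act on `𝔽₉ = 𝔽₃[i]` in two ways: faithfully, `r` by multiplication by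
`i` and `s` by conjugation, and by scalars through the character `r ↦ -1, s ↦ 1`. In the
first semidirect product `H72` no element `x ≠ 1` generates a normal subgroup, whereas the
first nontrivial term of a supersolvable series is cyclic and normal; so `H72`, and with it
`H72 × C_p`, which maps onto it, is not supersolvable. In the second, `G72`, every line of
`𝔽₉` is normal, which gives a normal series with factors of prime order. The two groups have,
for every `n`, the same number of solutions of `xⁿ = 1`; these numbers are the divisor sums of
the numbers of elements of each order, so they determine the multiset of element orders, and
they are multiplicative in direct products.
-/

section Supersolvable

variable {G G' : Type*} [Group G] [Group G']

theorem isCyclic_quotient_subgroupOf_of_map (f : G →* G') {A B : Subgroup G}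
    {A' B' : Subgroup G'}
    [(A.subgroupOf B).Normal] [(A'.subgroupOf B').Normal] [IsCyclic (B ⧸ A.subgroupOf B)]
    (hA : A.map f ≤ A') (hB : B.map f ≤ B')
    (hsurj : ∀ y ∈ B', ∃ x ∈ B, ∃ a ∈ A', y = f x * a) :
    IsCyclic (B' ⧸ A'.subgroupOf B') := by
  let fB : B →* B' := (Subgroup.inclusion hB).comp (f.subgroupMap B)
  have hker : A.subgroupOf B ≤ (A'.subgroupOf B').comap fB := fun x hx => hA ⟨x, hx, rfl⟩
  refine isCyclic_of_surjective _ <|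
    QuotientGroup.map_surjective_of_surjective (A.subgroupOf B) (A'.subgroupOf B') fB ?_ hker
  rintro ⟨y⟩
  obtain ⟨x, hx, a, ha, hy⟩ := hsurj y y.2
  refine ⟨⟨x, hx⟩, QuotientGroup.eq.mpr ?_⟩
  simpa [Subgroup.mem_subgroupOf, fB, hy] using ha

theorem IsSupersolvable.of_surjective (f : G →* G') (hf : Function.Surjective f)
    (h : IsSupersolvable G) : IsSupersolvable G' := by
  obtain ⟨k, H, hmono, hnorm, h0, hlast, hcyc⟩ := h
  refine ⟨k, fun i => (H i).map f, fun i => Subgroup.map_mono (hmono i),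
    fun i => (hnorm i).map f hf, ?_, ?_, fun i => ?_⟩
  · simp [h0]
  · simp [hlast, Subgroup.map_top_of_surjective f hf]
  · have := (hnorm i.castSucc).subgroupOf (H i.succ)
    have := hcyc i
    have := ((hnorm i.castSucc).map f hf).subgroupOf ((H i.succ).map f)
    refine isCyclic_quotient_subgroupOf_of_map f le_rfl le_rfl ?_
    rintro _ ⟨x, hx, rfl⟩
    exact ⟨x, hx, 1, one_mem _, (mul_one _).symm⟩

theorem IsSupersolvable.prod_of_isCyclic {C : Type*} [Group C] [IsCyclic C]
    (h : IsSupersolvable G) : IsSupersolvable (G × C) := by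
  obtain ⟨k, H, hmono, hnorm, h0, hlast, hcyc⟩ := h
  let H' : Fin (k + 2) → Subgroup (G × C) := Fin.cons ⊥ fun i => (H i).prod ⊤
  have hmono' : ∀ i : Fin (k + 1), H' i.castSucc ≤ H' i.succ := Fin.cases bot_le fun i => by
    simpa [H', ← Fin.succ_castSucc] using Subgroup.prod_mono (hmono i) le_rfl
  have hnorm' : ∀ i, (H' i).Normal := Fin.cases (by simp [H', Subgroup.normal_bot])
    fun i => by simpa [H'] using Subgroup.prod_normal (H i) ⊤ (hH := hnorm i)
  have hlast' : H' (Fin.last (k + 1)) = ⊤ := by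
    simp [H', ← Fin.succ_last, hlast, Subgroup.top_prod_top]
  refine ⟨k + 1, H', hmono', hnorm', rfl, hlast', Fin.cases ?_ fun i => ?_⟩
  · have : IsCyclic (↥(⊤ : Subgroup C) ⧸ (⊥ : Subgroup C).subgroupOf ⊤) :=
      isCyclic_of_surjective _ (QuotientGroup.mk'_surjective _)
    refine isCyclic_quotient_subgroupOf_of_map (MonoidHom.inr G C) (A := ⊥) (B := ⊤) ?_ ?_ ?_
    · simp [H']
    · rintro _ ⟨c, -, rfl⟩
      simp [H', Subgroup.mem_prod]
    · intro y hy
      simp only [H', Fin.cons_succ, h0, Subgroup.mem_prod, Subgroup.mem_bot] at hy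
      exact ⟨y.2, trivial, 1, one_mem _, by ext <;> simp [hy.1]⟩
  · have := (hnorm i.castSucc).subgroupOf (H i.succ)
    have := hcyc i
    refine isCyclic_quotient_subgroupOf_of_map (MonoidHom.inl G C)
      (A := H i.castSucc) (B := H i.succ) ?_ ?_ ?_
    · rintro _ ⟨x, hx, rfl⟩
      simpa [H', Subgroup.mem_prod] using hx
    · rintro _ ⟨x, hx, rfl⟩
      simpa [H', Subgroup.mem_prod] using hx
    · intro y hy
      simp only [H', Fin.cons_succ, Subgroup.mem_prod] at hy
      refine ⟨y.1, hy.1, (1, y.2), ?_, by ext <;> simp⟩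
      simp [H', Subgroup.mem_prod]

theorem IsSupersolvable.of_prime_card_ratio [Finite G] {k : ℕ} (H : Fin (k + 1) → Subgroup G)
    (hmono : ∀ i : Fin k, H i.castSucc ≤ H i.succ) (hnorm : ∀ i, (H i).Normal)
    (h0 : H 0 = ⊥) (hlast : H (Fin.last k) = ⊤)
    (hcard : ∀ i : Fin k, ∃ q, q.Prime ∧ Nat.card (H i.succ) = q * Nat.card (H i.castSucc)) :
    IsSupersolvable G := by
  refine ⟨k, H, hmono, hnorm, h0, hlast, fun i => ?_⟩
  obtain ⟨q, hq, hi⟩ := hcard i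
  have : Fact q.Prime := ⟨hq⟩
  refine isCyclic_of_prime_card (p := q) <|
    Nat.eq_of_mul_eq_mul_left (Nat.card_pos (α := H i.castSucc)) ?_
  have := Subgroup.relIndex_mul_relIndex ⊥ _ _ bot_le (hmono i)
  rwa [Subgroup.relIndex_bot_left, Subgroup.relIndex_bot_left, hi, mul_comm q] at this

theorem IsSupersolvable.exists_ne_one_zpowers_normal [Nontrivial G] (h : IsSupersolvable G) :
    ∃ x : G, x ≠ 1 ∧ (Subgroup.zpowers x).Normal := by
  obtain ⟨k, H, -, hnorm, h0, hlast, hcyc⟩ := h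
  suffices ∀ i, H i = ⊥ ∨ ∃ x : G, x ≠ 1 ∧ (Subgroup.zpowers x).Normal by
    simpa [hlast] using this (Fin.last k)
  refine Fin.induction (Or.inl h0) fun i ih => ih.elim (fun hbot => ?_) Or.inr
  have := (hnorm i.castSucc).subgroupOf (H i.succ)
  have := hcyc i
  have : IsCyclic (H i.succ) :=
    isCyclic_of_injective (QuotientGroup.mk' ((H i.castSucc).subgroupOf (H i.succ))) <|
      (MonoidHom.ker_eq_bot_iff _).mp (by rw [QuotientGroup.ker_mk', hbot, Subgroup.bot_subgroupOf])
  obtain ⟨x, hx⟩ := (Subgroup.isCyclic_iff_exists_zpowers_eq_top _).mp this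
  by_cases hx1 : x = 1
  · exact Or.inl (by rw [← hx, hx1, Subgroup.zpowers_one_eq_bot])
  · exact Or.inr ⟨x, hx1, hx ▸ hnorm i.succ⟩

theorem not_isSupersolvable_of_forall_exists_conj_ne_pow [Fintype G] [Nontrivial G]
    (h : ∀ x : G, x ≠ 1 → ∃ g : G, ∀ n < Fintype.card G, g * x * g⁻¹ ≠ x ^ n) :
    ¬ IsSupersolvable G := by
  classical
  intro hG
  obtain ⟨x, hx, hnormal⟩ := hG.exists_ne_one_zpowers_normal
  obtain ⟨g, hg⟩ := h x hx
  obtain ⟨n, hn, hxn⟩ := Finset.mem_image.mp <| mem_zpowers_iff_mem_range_orderOf.mp <|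
    hnormal.conj_mem x (Subgroup.mem_zpowers x) g
  exact hg n ((Finset.mem_range.mp hn).trans_le orderOf_le_card_univ) hxn.symm

end Supersolvable

section OrderCounts

open Finset

variable {G G' : Type*} [Group G] [Group G'] [Fintype G] [Fintype G'] [DecidableEq G]
  [DecidableEq G']

theorem card_orderOf_eq_of_card_pow_eq_one
    (h : ∀ n, #{x : G | x ^ n = 1} = #{x : G' | x ^ n = 1}) (m : ℕ) :
    #{x : G | orderOf x = m} = #{x : G' | orderOf x = m} := by
  refine Nat.strong_induction_on m fun m ih => ?_
  rcases eq_or_ne m 0 with rfl | hm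
  · simp [(orderOf_pos _).ne']
  have hG := sum_card_orderOf_eq_card_pow_eq_one (G := G) hm
  have hG' := sum_card_orderOf_eq_card_pow_eq_one (G := G') hm
  rw [← Nat.cons_self_properDivisors hm, sum_cons] at hG hG'
  have hproper : ∑ d ∈ m.properDivisors, #{x : G | orderOf x = d} =
      ∑ d ∈ m.properDivisors, #{x : G' | orderOf x = d} :=
    sum_congr rfl fun d hd => ih d (Nat.mem_properDivisors.mp hd).2
  linarith [h m]

theorem orderMultiset_eq_of_card_pow_eq_one
    (h : ∀ n, #{x : G | x ^ n = 1} = #{x : G' | x ^ n = 1}) :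
    orderMultiset G = orderMultiset G' := by
  ext m
  simpa [orderMultiset, Multiset.count_map, ← filter_val, eq_comm] using
    card_orderOf_eq_of_card_pow_eq_one h m

theorem orderSequence_eq_of_card_pow_eq_one
    (h : ∀ n, #{x : G | x ^ n = 1} = #{x : G' | x ^ n = 1}) :
    orderSequence G = orderSequence G' :=
  congrArg (fun s : Multiset ℕ => s.sort (· ≤ ·)) (orderMultiset_eq_of_card_pow_eq_one h)

theorem card_prod_pow_eq_one (n : ℕ) :
    #{x : G × G' | x ^ n = 1} = #{x : G | x ^ n = 1} * #{x : G' | x ^ n = 1} := by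
  rw [← card_product, ← filter_product, ← univ_product_univ]
  simp [Prod.ext_iff]

theorem card_pow_eq_one_eq_card_pow_gcd_card_eq_one (n : ℕ) :
    #{x : G | x ^ n = 1} = #{x : G | x ^ n.gcd (Fintype.card G) = 1} := by
  simp [pow_gcd_eq_one, pow_card_eq_one]

end OrderCounts

instance SemidirectProduct.instFintype {N G : Type*} [Group N] [Group G] [Fintype N] [Fintype G]
    (φ : G →* MulAut N) : Fintype (N ⋊[φ] G) :=
  Fintype.ofEquiv _ SemidirectProduct.equivProd.symm

def mulAutOfAct {D V : Type*} [Group D] [AddGroup V] (act : D → V → V)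
    (hmul : ∀ d e v, act (d * e) v = act d (act e v)) (hone : ∀ v, act 1 v = v)
    (hadd : ∀ d v w, act d (v + w) = act d v + act d w) :
    D →* MulAut (Multiplicative V) where
  toFun d :=
    { toFun v := .ofAdd (act d v.toAdd)
      invFun v := .ofAdd (act d⁻¹ v.toAdd)
      left_inv v := by simp [← hmul, hone]
      right_inv v := by simp [← hmul, hone]
      map_mul' v w := hadd d v.toAdd w.toAdd }
  map_one' := by ext; simp [hone]
  map_mul' d e := by ext; simp [hmul]; rfl

namespace OrderSeq72

open DihedralGroup Finset

/-- `(a, b)` stands for `a + b i` in `𝔽₉ = 𝔽₃[i]`. -/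
abbrev F9 := ZMod 3 × ZMod 3

def mulI (v : F9) : F9 := (-v.2, v.1)

def conj (v : F9) : F9 := (v.1, -v.2)

def faithfulAct : DihedralGroup 4 → F9 → F9
  | r k, v => mulI^[k.val] v
  | sr k, v => conj (mulI^[k.val] v)

def signAct : DihedralGroup 4 → F9 → F9
  | r k, v => Neg.neg^[k.val] v
  | sr k, v => Neg.neg^[k.val] v

def faithfulAut : DihedralGroup 4 →* MulAut (Multiplicative F9) :=
  mulAutOfAct faithfulAct (by decide) (by decide) (by decide)

def signAut : DihedralGroup 4 →* MulAut (Multiplicative F9) :=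
  mulAutOfAct signAct (by decide) (by decide) (by decide)

abbrev H72 := Multiplicative F9 ⋊[faithfulAut] DihedralGroup 4

abbrev G72 := Multiplicative F9 ⋊[signAut] DihedralGroup 4

theorem card_H72 : Fintype.card H72 = 72 := rfl

theorem card_G72 : Fintype.card G72 = 72 := rfl

set_option maxRecDepth 10000 in
theorem card_pow_eq_one_G72_eq_H72_of_mem_divisors :
    ∀ n ∈ Nat.divisors 72, #{x : G72 | x ^ n = 1} = #{x : H72 | x ^ n = 1} := by
  decide

theorem card_pow_eq_one_G72_eq_H72 (n : ℕ) :
    #{x : G72 | x ^ n = 1} = #{x : H72 | x ^ n = 1} := by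
  rw [card_pow_eq_one_eq_card_pow_gcd_card_eq_one,
    card_pow_eq_one_eq_card_pow_gcd_card_eq_one (G := H72), card_G72, card_H72]
  exact card_pow_eq_one_G72_eq_H72_of_mem_divisors _
    (Nat.mem_divisors.mpr ⟨Nat.gcd_dvd_right _ _, by norm_num⟩)

set_option maxRecDepth 10000 in
theorem H72.exists_conj_ne_pow :
    ∀ x : H72, x ≠ 1 → ∃ g : H72, ∀ n < 72, g * x * g⁻¹ ≠ x ^ n := by
  decide

theorem H72.not_isSupersolvable : ¬ IsSupersolvable H72 :=
  have : Nontrivial H72 := Fintype.one_lt_card_iff_nontrivial.mp (by rw [card_H72]; norm_num)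
  not_isSupersolvable_of_forall_exists_conj_ne_pow (card_H72 ▸ H72.exists_conj_ne_pow)

namespace G72

def chainMem : Fin 6 → G72 → Bool
  | 0, x => x = 1
  | 1, x => x.right = 1 ∧ x.left.toAdd.2 = 0
  | 2, x => x.right = 1
  | 3, x => x.right = 1 ∨ x.right = r 2
  | 4, x => x.right ∈ [r 0, r 1, r 2, r 3]
  | 5, _ => true

set_option maxRecDepth 10000 in
def chain (i : Fin 6) : Subgroup G72 where
  carrier := {x | chainMem i x}
  mul_mem' {a b} := by revert i a b; decide
  one_mem' := by revert i; decide
  inv_mem' {a} := by revert i a; decide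

instance (i : Fin 6) : DecidablePred (· ∈ chain i) :=
  fun x => inferInstanceAs (Decidable (chainMem i x))

set_option maxRecDepth 10000 in
theorem card_chain : ∀ i : Fin 6, Fintype.card (chain i) = ![1, 3, 9, 18, 36, 72] i := by
  decide

set_option maxRecDepth 10000 in
theorem chain_normal :
    ∀ i : Fin 6, ∀ x ∈ chain i, ∀ g : G72, g * x * g⁻¹ ∈ chain i := by
  decide

set_option maxRecDepth 10000 in
theorem chain_mono : ∀ i : Fin 5, ∀ x ∈ chain i.castSucc, x ∈ chain i.succ := by
  decide

theorem isSupersolvable : IsSupersolvable G72 := by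
  refine IsSupersolvable.of_prime_card_ratio chain chain_mono (fun i => ⟨chain_normal i⟩)
    ((Subgroup.eq_bot_iff_forall _).mpr (by decide)) ((Subgroup.eq_top_iff' _).mpr (by decide))
    fun i => ?_
  simp only [Nat.card_eq_fintype_card, card_chain]
  fin_cases i
  exacts [⟨3, Nat.prime_three, rfl⟩, ⟨3, Nat.prime_three, rfl⟩, ⟨2, Nat.prime_two, rfl⟩,
    ⟨2, Nat.prime_two, rfl⟩, ⟨2, Nat.prime_two, rfl⟩]

end G72

end OrderSeq72

theorem exists_equal_orderSequence_72p_general {p : ℕ} (hp : p.Prime) :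
    ∃ (H : Type) (gH : Group H) (fH : Fintype H) (G : Type) (gG : Group G)
      (fG : Fintype G),
      letI := gH; letI := fH; letI := gG; letI := fG;
      Fintype.card H = 72 * p ∧ Fintype.card G = 72 * p ∧
      ¬ IsSupersolvable H ∧ IsSupersolvable G ∧
      orderSequence G = orderSequence H := by
  have : NeZero p := ⟨hp.ne_zero⟩
  open OrderSeq72 in
  refine ⟨H72 × Multiplicative (ZMod p), inferInstance, inferInstance,
    G72 × Multiplicative (ZMod p), inferInstance, inferInstance,
    by simp [card_H72], by simp [card_G72],
    fun h => H72.not_isSupersolvable (h.of_surjective (MonoidHom.fst _ _) Prod.fst_surjective),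
    G72.isSupersolvable.prod_of_isCyclic, orderSequence_eq_of_card_pow_eq_one fun n => ?_⟩
  rw [card_prod_pow_eq_one, card_prod_pow_eq_one, OrderSeq72.card_pow_eq_one_G72_eq_H72]

/-- For every prime `p ≥ 5` there are groups `H` and `G` of order `72p` such that `H`
is non-supersolvable, `G` is supersolvable and they have equal order sequences. -/
theorem exists_equal_orderSequence_72p {p : ℕ} (hp : p.Prime) (hp5 : 5 ≤ p) :
    ∃ (H : Type) (gH : Group H) (fH : Fintype H) (G : Type) (gG : Group G)
      (fG : Fintype G),
      letI := gH; letI := fH; letI := gG; letI := fG;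
      Fintype.card H = 72 * p ∧ Fintype.card G = 72 * p ∧
      ¬ IsSupersolvable H ∧ IsSupersolvable G ∧
      orderSequence G = orderSequence H :=
  exists_equal_orderSequence_72p_general hp
end

section
/- Let p ≥ 11 be an odd prime with p ≡ 2 (mod 3). Then the order sequence of C_p × A_4 properly dominates the order sequence of S_3 × D_{2p}, where S_3 is the symmetric group on 3 letters and D_{2p} is the dihedral group of order 2p (note both groups have order 12p). -/
/-
Element orders in a direct product are lcms of the orders in the factors, which gives the order
tables of `C_p × A_4` and `S_3 × D_{2p}` (both of order `12p`). Two sorted sequences of the same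
length satisfy `a_i ≥ b_i` for all `i` as soon as, for every threshold `t`, the first has at most
as many terms below `t` as the second: if `a_i < b_i`, then at `t = b_i` the first has at least
`i + 1` such terms and the second at most `i`. For the two order tables this is a comparison of
linear expressions in `p`, and the sequences differ in their number of elements of order `3`.
-/

theorem Multiset.countP_replicate {α : Type*} (p : α → Prop) [DecidablePred p] (n : ℕ)
    (a : α) : (replicate n a).countP p = if p a then n else 0 := by
  rw [← coe_replicate, coe_countP, List.countP_replicate]
  simp

namespace List

variable {α : Type*} [LinearOrder α]

theorem Pairwise.getElem_lt_iff_lt_countP {l : List α} (hl : l.Pairwise (· ≤ ·)) (t : α)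
    {i : ℕ} (hi : i < l.length) : l[i] < t ↔ i < l.countP (· < t) := by
  induction l generalizing i with
  | nil => simp at hi
  | cons x xs ih =>
    obtain ⟨hx, hxs⟩ := pairwise_cons.mp hl
    rcases i with _ | i
    · by_cases hxt : x < t
      · simp [hxt]
      · have : xs.countP (· < t) = 0 :=
          countP_eq_zero.mpr fun y hy hyt => hxt ((hx y hy).trans_lt (by simpa using hyt))
        simp [hxt, this]
    · have hi' : i < xs.length := by simpa using hi
      have hxi : x ≤ xs[i] := hx _ (getElem_mem _)
      rw [getElem_cons_succ, ih hxs hi', countP_cons]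
      by_cases hxt : x < t
      · simp [hxt]
      · have : ¬ i < xs.countP (· < t) := (ih hxs hi').not.mp fun h => hxt (hxi.trans_lt h)
        simp only [hxt, decide_false, Bool.false_eq_true, if_false, add_zero]
        omega

theorem forall₂_ge_of_countP_lt_le {l₁ l₂ : List α} (h₁ : l₁.Pairwise (· ≤ ·))
    (h₂ : l₂.Pairwise (· ≤ ·)) (hlen : l₁.length = l₂.length)
    (hcount : ∀ t, l₁.countP (· < t) ≤ l₂.countP (· < t)) :
    Forall₂ (· ≥ ·) l₁ l₂ := by
  refine forall₂_iff_get.mpr ⟨hlen, fun i hi₁ hi₂ => not_lt.mp fun hlt => ?_⟩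
  have hcount₁ : i < l₁.countP (· < l₂[i]) := (h₁.getElem_lt_iff_lt_countP _ hi₁).mp hlt
  exact lt_irrefl _ ((h₂.getElem_lt_iff_lt_countP _ hi₂).mpr (hcount₁.trans_le (hcount _)))

end List

section OrderSequence

variable {G H : Type*} [Group G] [Fintype G] [Group H] [Fintype H]

theorem coe_orderSequence : (orderSequence G : Multiset ℕ) = orderMultiset G :=
  Multiset.sort_eq _ _

theorem dominates_orderSequence_of_countP_lt_le (hcard : Fintype.card G = Fintype.card H)
    (hcount : ∀ t, (orderMultiset G).countP (· < t) ≤ (orderMultiset H).countP (· < t)) :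
    Dominates (orderSequence G) (orderSequence H) := by
  refine List.forall₂_ge_of_countP_lt_le (Multiset.pairwise_sort _ _) (Multiset.pairwise_sort _ _)
    ?_ fun t => ?_
  · simp [orderSequence, hcard]
  · simpa [← Multiset.coe_countP, coe_orderSequence] using hcount t

theorem orderMultiset_prod :
    orderMultiset (G × H) = (orderMultiset G).bind fun m => (orderMultiset H).map (Nat.lcm m) := by
  rw [orderMultiset, ← Finset.univ_product_univ, Finset.product_val]
  simp only [SProd.sprod, Multiset.product, Multiset.map_bind, orderMultiset, Multiset.bind_map]
  simp [Multiset.map_map, Prod.orderOf]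

theorem orderMultiset_of_card_eq_prime {p : ℕ} [Fact p.Prime] (hG : Fintype.card G = p) :
    orderMultiset G = 1 ::ₘ Multiset.replicate (p - 1) p := by
  classical
  have huniv : (Finset.univ : Finset G).val = 1 ::ₘ (Finset.univ.erase 1).val :=
    (Multiset.cons_erase (Finset.mem_univ _)).symm
  have hord : ∀ g ∈ (Finset.univ.erase (1 : G)).val, orderOf g = p := fun g hg =>
    orderOf_eq_prime (hG ▸ pow_card_eq_one) (Finset.ne_of_mem_erase hg)
  rw [orderMultiset, huniv, Multiset.map_cons, orderOf_one, Multiset.map_congr rfl hord,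
    Multiset.map_const', Finset.card_val, Finset.card_erase_of_mem (Finset.mem_univ _),
    Finset.card_univ, hG]

end OrderSequence

theorem orderOf_eq_ite_of_sq_or_cube_eq_one {G : Type*} [Group G] [DecidableEq G] {g : G}
    (h : g ^ 2 = 1 ∨ g ^ 3 = 1) :
    orderOf g = if g = 1 then 1 else if g ^ 2 = 1 then 2 else 3 := by
  split_ifs with h1 h2
  · simp [h1]
  · exact orderOf_eq_prime h2 h1
  · exact orderOf_eq_prime (h.resolve_left h2) h1

theorem orderMultiset_alternatingGroup_fin_four :
    orderMultiset (alternatingGroup (Fin 4)) =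
      {1} + Multiset.replicate 3 2 + Multiset.replicate 8 3 := by
  have h : ∀ g : alternatingGroup (Fin 4), g ^ 2 = 1 ∨ g ^ 3 = 1 := by decide
  rw [orderMultiset, Multiset.map_congr rfl fun g _ => orderOf_eq_ite_of_sq_or_cube_eq_one (h g)]
  decide

theorem orderMultiset_perm_fin_three :
    orderMultiset (Equiv.Perm (Fin 3)) =
      {1} + Multiset.replicate 3 2 + Multiset.replicate 2 3 := by
  have h : ∀ g : Equiv.Perm (Fin 3), g ^ 2 = 1 ∨ g ^ 3 = 1 := by decide
  rw [orderMultiset, Multiset.map_congr rfl fun g _ => orderOf_eq_ite_of_sq_or_cube_eq_one (h g)]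
  decide

theorem orderMultiset_dihedralGroup (n : ℕ) [NeZero n] :
    orderMultiset (DihedralGroup n) =
      orderMultiset (Multiplicative (ZMod n)) + Multiset.replicate n 2 := by
  have hr : ∀ i : ZMod n, orderOf (DihedralGroup.r i) = orderOf (Multiplicative.ofAdd i) := by
    intro i
    rw [DihedralGroup.orderOf_r, orderOf_ofAdd_eq_addOrderOf, ← ZMod.natCast_zmod_val i,
      ZMod.addOrderOf_coe _ (NeZero.ne n), ZMod.val_natCast_of_lt (ZMod.val_lt i)]
  conv_lhs => rw [orderMultiset, ← Finset.map_univ_equiv DihedralGroup.equivSum.symm]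
  rw [Finset.map_val, Multiset.map_map, ← Finset.univ_disjSum_univ, Finset.val_disjSum,
    Multiset.disjSum, Multiset.map_add, Multiset.map_map, Multiset.map_map]
  congr 1
  -- `ZMod n` and `Multiplicative (ZMod n)` carry different (but equal) `Fintype` instances.
  · exact Multiset.map_congr (by congr; exact Subsingleton.elim _ _) fun i _ => hr i
  · simp [DihedralGroup.orderOf_sr, ZMod.card]

theorem Nat.Prime.lcm_eq_mul_of_ne {q p : ℕ} (hq : q.Prime) (hp : p.Prime) (hqp : q ≠ p) :
    q.lcm p = q * p :=
  ((Nat.coprime_primes hq hp).mpr hqp).lcm_eq_mul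

section Tables

variable {p : ℕ} [Fact p.Prime]

theorem orderMultiset_zmod_prod_alternatingGroup (hp : 5 ≤ p) :
    orderMultiset (Multiplicative (ZMod p) × alternatingGroup (Fin 4)) =
      {1} + Multiset.replicate 3 2 + Multiset.replicate 8 3 + Multiset.replicate (p - 1) p +
        Multiset.replicate (3 * (p - 1)) (2 * p) + Multiset.replicate (8 * (p - 1)) (3 * p) := by
  have h2 : p.lcm 2 = 2 * p := by
    rw [Nat.lcm_comm, Nat.prime_two.lcm_eq_mul_of_ne Fact.out (by omega)]
  have h3 : p.lcm 3 = 3 * p := by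
    rw [Nat.lcm_comm, Nat.prime_three.lcm_eq_mul_of_ne Fact.out (by omega)]
  rw [orderMultiset_prod, orderMultiset_of_card_eq_prime (p := p) (by simp),
    orderMultiset_alternatingGroup_fin_four]
  ext a
  simp only [Multiset.map_add, Multiset.map_singleton, Multiset.map_replicate, Multiset.count_bind,
    Multiset.map_cons, Multiset.sum_cons, Multiset.sum_replicate, smul_eq_mul, Multiset.count_add,
    Multiset.count_singleton, Multiset.count_replicate, Nat.lcm_one_left, Nat.lcm_one_right, h2, h3]
  split_ifs <;> omega

theorem orderMultiset_perm_prod_dihedralGroup (hp : 5 ≤ p) :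
    orderMultiset (Equiv.Perm (Fin 3) × DihedralGroup p) =
      {1} + Multiset.replicate (4 * p + 3) 2 + Multiset.replicate 2 3 +
        Multiset.replicate (2 * p) 6 + Multiset.replicate (p - 1) p +
        Multiset.replicate (3 * (p - 1)) (2 * p) + Multiset.replicate (2 * (p - 1)) (3 * p) := by
  have h2 : Nat.lcm 2 p = 2 * p := Nat.prime_two.lcm_eq_mul_of_ne Fact.out (by omega)
  have h3 : Nat.lcm 3 p = 3 * p := Nat.prime_three.lcm_eq_mul_of_ne Fact.out (by omega)
  rw [orderMultiset_prod, orderMultiset_perm_fin_three, orderMultiset_dihedralGroup,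
    orderMultiset_of_card_eq_prime (p := p) (by simp)]
  ext a
  simp only [Multiset.map_add, Multiset.map_cons, Multiset.map_singleton, Multiset.map_replicate,
    Multiset.count_bind, Multiset.sum_add, Multiset.sum_singleton, Multiset.sum_replicate,
    smul_eq_mul, Multiset.count_add, Multiset.count_cons,
    Multiset.count_singleton, Multiset.count_replicate, Nat.lcm_one_left, Nat.lcm_one_right,
    Nat.lcm_self, h2, h3, show Nat.lcm 3 2 = 6 by norm_num]
  split_ifs <;> omega

theorem countP_lt_orderMultiset_zmod_prod_alternatingGroup_le (hp : 5 ≤ p) (t : ℕ) :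
    (orderMultiset (Multiplicative (ZMod p) × alternatingGroup (Fin 4))).countP (· < t) ≤
      (orderMultiset (Equiv.Perm (Fin 3) × DihedralGroup p)).countP (· < t) := by
  rw [orderMultiset_zmod_prod_alternatingGroup hp, orderMultiset_perm_prod_dihedralGroup hp]
  simp only [← Multiset.replicate_one, Multiset.countP_add, Multiset.countP_replicate]
  split_ifs <;> omega

end Tables

theorem properlyDominates_Cp_A4_S3_D2p_general {p : ℕ} [Fact p.Prime] (hp11 : 11 ≤ p) :
    ProperlyDominates
      (orderSequence (Multiplicative (ZMod p) × alternatingGroup (Fin 4)))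
      (orderSequence (Equiv.Perm (Fin 3) × DihedralGroup p)) := by
  have hp : 5 ≤ p := by omega
  refine ⟨dominates_orderSequence_of_countP_lt_le ?_
    (countP_lt_orderMultiset_zmod_prod_alternatingGroup_le hp), fun h => ?_⟩
  · have hA4 : Fintype.card (alternatingGroup (Fin 4)) = 12 := by
      rw [card_alternatingGroup]; rfl
    simp only [Fintype.card_prod, Fintype.card_multiplicative, ZMod.card, hA4, Fintype.card_perm,
      Fintype.card_fin, DihedralGroup.card]
    ring
  · have h3 := congrArg (Multiset.count 3) (congrArg ((↑) : List ℕ → Multiset ℕ) h)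
    rw [coe_orderSequence, coe_orderSequence, orderMultiset_zmod_prod_alternatingGroup hp,
      orderMultiset_perm_prod_dihedralGroup hp] at h3
    simp only [Multiset.count_add, Multiset.count_singleton, Multiset.count_replicate] at h3
    split_ifs at h3 <;> omega

/-- For an odd prime `p ≥ 11` with `p ≡ 2 (mod 3)`, the order sequence of `C_p × A_4`
properly dominates the order sequence of `S_3 × D_{2p}`. -/
theorem properlyDominates_Cp_A4_S3_D2p {p : ℕ} [Fact p.Prime] (hodd : Odd p)
    (hp11 : 11 ≤ p) (hmod : p % 3 = 2) :
    ProperlyDominates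
      (orderSequence (Multiplicative (ZMod p) × alternatingGroup (Fin 4)))
      (orderSequence (Equiv.Perm (Fin 3) × DihedralGroup p)) :=
  properlyDominates_Cp_A4_S3_D2p_general hp11
end

section
/- Every non-supersolvable group of order 132 is isomorphic to C_11 × A_4, the direct product of the cyclic group of order 11 with the alternating group on 4 letters. -/
/-!
The Sylow 11-subgroup `P` is normal. Otherwise it is self-normalizing, so Burnside's transfer
theorem gives it a normal complement `K` of order 12; `P` permutes the involutions of `K`, of
which there are between 1 and 10, so it centralizes one of them, which then lies in
`N(P) = P`, absurd. By Schur–Zassenhaus `P` has a complement `H ≅ G ⧸ P` of order 12. If the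
Sylow 3-subgroup of `H` is normal, `H`, and with it `G`, is supersolvable. Otherwise `H` acts
faithfully on its four Sylow 3-subgroups with image of index 2 in `S₄`, so `H ≅ A₄`. As `A₄`
is generated by elements of order 3 and `|Aut P| = 10`, `H` centralizes `P`, so `G ≅ P × H`.
-/

open Subgroup

-- `N.Normal` is found by unification, not instance search: in `of_surjective` the subgroup is
-- `⊥.subgroupOf _` only after unfolding `Fin.cases`.
theorem isCyclic_quotient {G : Type*} [Group G] [IsCyclic G] (N : Subgroup G) {_ : N.Normal} :
    IsCyclic (G ⧸ N) :=
  isCyclic_of_surjective _ (QuotientGroup.mk'_surjective N)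

theorem isCyclic_quotient_comap {G Q : Type*} [Group G] [Group Q] (f : G →* Q)
    (hf : Function.Surjective f) (A B : Subgroup Q) [B.Normal]
    (hc : IsCyclic (A ⧸ B.subgroupOf A)) :
    IsCyclic (A.comap f ⧸ (B.comap f).subgroupOf (A.comap f)) := by
  let φ := (QuotientGroup.mk' (B.subgroupOf A)).comp (f.subgroupComap A)
  have hφ : Function.Surjective φ :=
    (QuotientGroup.mk'_surjective _).comp (f.subgroupComap_surjective_of_surjective A hf)
  have hker : φ.ker = (B.comap f).subgroupOf (A.comap f) := by
    ext x
    simp only [MonoidHom.mem_ker, MonoidHom.coe_comp, Function.comp_apply,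
      QuotientGroup.mk'_apply, QuotientGroup.eq_one_iff, mem_subgroupOf, mem_comap, φ]
    rfl
  exact isCyclic_of_surjective _
    ((QuotientGroup.quotientMulEquivOfEq hker).symm.trans
      (QuotientGroup.quotientKerEquivOfSurjective φ hφ)).symm.surjective

namespace IsSupersolvable

theorem of_subsingleton (G : Type*) [Group G] [Subsingleton G] : IsSupersolvable G :=
  ⟨0, fun _ => ⊥, fun i => i.elim0, fun _ => normal_bot, rfl, Subsingleton.elim _ _,
    fun i => i.elim0⟩

theorem of_surjective_s16 {G Q : Type*} [Group G] [Group Q] (f : G →* Q)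
    (hf : Function.Surjective f) [IsCyclic f.ker] (hQ : IsSupersolvable Q) :
    IsSupersolvable G := by
  obtain ⟨k, H, hmono, hnorm, h0, hlast, hcyc⟩ := hQ
  refine ⟨k + 1, Fin.cases ⊥ fun j => (H j).comap f, ?_, ?_, by simp, ?_, ?_⟩
  · intro i
    induction i using Fin.cases with
    | zero => exact bot_le
    | succ j => exact comap_mono (hmono j)
  · intro i
    induction i using Fin.cases with
    | zero => exact normal_bot
    | succ j => exact (hnorm j).comap f
  · show (H (Fin.last k)).comap f = ⊤
    rw [hlast, comap_top]
  · intro i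
    induction i using Fin.cases with
    | zero =>
      have hker : (H 0).comap f = f.ker := by rw [h0]; rfl
      have : IsCyclic ((H 0).comap f) :=
        isCyclic_of_surjective _ (MulEquiv.subgroupCongr hker).symm.surjective
      exact isCyclic_quotient (G := (H 0).comap f) _
    | succ j =>
      have := hnorm j.castSucc
      exact isCyclic_quotient_comap f hf _ _ (hcyc j)

theorem of_quotient {G : Type*} [Group G] (N : Subgroup G) [N.Normal] [IsCyclic N]
    (h : IsSupersolvable (G ⧸ N)) : IsSupersolvable G := by
  have : IsCyclic (QuotientGroup.mk' N).ker := by rwa [QuotientGroup.ker_mk']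
  exact of_surjective_s16 _ (QuotientGroup.mk'_surjective N) h

theorem of_mulEquiv {G G' : Type*} [Group G] [Group G'] (e : G ≃* G')
    (h : IsSupersolvable G') : IsSupersolvable G := by
  have : IsCyclic e.toMonoidHom.ker := by
    rw [(MonoidHom.ker_eq_bot_iff _).mpr e.injective]; infer_instance
  exact of_surjective_s16 e.toMonoidHom e.surjective h

theorem of_commGroup (G : Type*) [CommGroup G] [Finite G] : IsSupersolvable G := by
  induction h : Nat.card G using Nat.strong_induction_on generalizing G with
  | _ n ih =>
    rcases subsingleton_or_nontrivial G with _ | _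
    · exact of_subsingleton G
    obtain ⟨g, hg⟩ := exists_ne (1 : G)
    refine of_quotient (zpowers g) (ih _ ?_ _ rfl)
    have hcard := card_eq_card_quotient_mul_card_subgroup (zpowers g)
    have hg' : 1 < Nat.card (zpowers g) :=
      (zpowers g).one_lt_card_iff_ne_bot.mpr (zpowers_ne_bot.mpr hg)
    have : 0 < Nat.card (G ⧸ zpowers g) := Nat.card_pos
    nlinarith

theorem of_card_quotient_eq_prime_sq {G : Type*} [Group G] {p : ℕ} [Fact p.Prime]
    (N : Subgroup G) [N.Normal] [IsCyclic N] (h : Nat.card (G ⧸ N) = p ^ 2) :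
    IsSupersolvable G := by
  have : Finite (G ⧸ N) :=
    Nat.finite_of_card_ne_zero (h ▸ pow_ne_zero 2 (Fact.out : p.Prime).ne_zero)
  let _ := IsPGroup.commGroupOfCardEqPrimeSq h
  exact of_quotient N (of_commGroup _)

end IsSupersolvable

theorem Sylow.card_eq_of_dvd_of_not_sq_dvd {G : Type*} [Group G] [Finite G] {p : ℕ}
    [hp : Fact p.Prime] (P : Sylow p G) (hdvd : p ∣ Nat.card G) (hsq : ¬ p ^ 2 ∣ Nat.card G) :
    Nat.card P = p := by
  have h1 : 1 ≤ (Nat.card G).factorization p := by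
    rwa [← hp.out.pow_dvd_iff_le_factorization Nat.card_pos.ne', pow_one]
  have h2 : (Nat.card G).factorization p < 2 := by
    rwa [← not_le, ← hp.out.pow_dvd_iff_le_factorization Nat.card_pos.ne']
  rw [P.card_eq_multiplicity, show (Nat.card G).factorization p = 1 by omega, pow_one]

theorem card_sylow_eq_one_or_eq_succ {G : Type*} [Group G] [Finite G] {p : ℕ} [hp : Fact p.Prime]
    (P : Sylow p G) (hP : P.index = p + 1) :
    Nat.card (Sylow p G) = 1 ∨ Nat.card (Sylow p G) = p + 1 := by
  have hdvd : Nat.card (Sylow p G) ∣ p + 1 := hP ▸ P.card_dvd_index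
  obtain ⟨k, hk⟩ : ∃ k, Nat.card (Sylow p G) = 1 + p * k := by
    have := (card_sylow_modEq_one p G).symm
    have hpos : 1 ≤ Nat.card (Sylow p G) := Nat.card_pos
    obtain ⟨k, hk⟩ := (Nat.modEq_iff_dvd' hpos).mp this
    exact ⟨k, by omega⟩
  have hle := Nat.le_of_dvd (Nat.succ_pos p) hdvd
  have hp2 := hp.out.two_le
  rcases k with _ | _ | k
  · left; simpa using hk
  · right; omega
  · nlinarith

theorem Sylow.normalizer_eq_self_of_card_eq_index {G : Type*} [Group G] [Finite G] {p : ℕ}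
    [Fact p.Prime] (P : Sylow p G) (hP : Nat.card (Sylow p G) = P.index) :
    normalizer (P : Set G) = P := by
  refine (eq_of_le_of_card_ge le_normalizer ?_).symm
  have h1 := (P : Subgroup G).card_mul_index
  have h2 := (normalizer (P : Set G)).card_mul_index
  rw [← P.card_eq_index_normalizer, hP] at h2
  have : (P : Subgroup G).index ≠ 0 := Subgroup.index_ne_zero_of_finite
  exact (Nat.eq_of_mul_eq_mul_right (Nat.pos_of_ne_zero this) (h2.trans h1.symm)).le

theorem IsPGroup.exists_fixed_orderOf_eq {p : ℕ} [Fact p.Prime] {P K : Type*} [Group P] [Group K]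
    [MulDistribMulAction P K] [Finite K] (hP : IsPGroup p P) (n : ℕ)
    (hn : ¬ p ∣ Nat.card {k : K // orderOf k = n}) :
    ∃ k : K, orderOf k = n ∧ ∀ g : P, g • k = k := by
  let S : SubMulAction P K :=
    { carrier := {k | orderOf k = n}
      smul_mem' := fun g k (hk : orderOf k = n) =>
        (orderOf_injective (MulDistribMulAction.toMonoidHom K g) (MulAction.injective g) k).trans
          hk }
  obtain ⟨⟨k, hk⟩, hfix⟩ := hP.nonempty_fixed_point_of_prime_not_dvd_card S hn
  exact ⟨k, hk, fun g => congrArg Subtype.val (hfix g)⟩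

theorem exists_orderOf_eq_mem_centralizer {G : Type*} [Group G] {p : ℕ} [Fact p.Prime]
    {P K : Subgroup G} [K.Normal] [Finite K] (hP : IsPGroup p P) (n : ℕ)
    (hn : ¬ p ∣ Nat.card {k : K // orderOf k = n}) :
    ∃ x ∈ K, orderOf x = n ∧ x ∈ centralizer (P : Set G) := by
  let _ : MulDistribMulAction P K :=
    MulDistribMulAction.compHom K ((MulAut.conjNormal : G →* MulAut K).comp P.subtype)
  obtain ⟨k, hk, hfix⟩ := hP.exists_fixed_orderOf_eq n hn
  refine ⟨k, k.2, by rwa [orderOf_coe], fun g hg => ?_⟩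
  have : g * k * g⁻¹ = k := congrArg Subtype.val (hfix ⟨g, hg⟩)
  exact mul_inv_eq_iff_eq_mul.mp this

theorem not_eleven_dvd_card_orderOf_eq_two {K : Type*} [Group K] [Finite K]
    (hK : Nat.card K = 12) : ¬ 11 ∣ Nat.card {k : K // orderOf k = 2} := by
  classical
  have : Fintype K := Fintype.ofFinite K
  obtain ⟨a, ha⟩ := exists_prime_orderOf_dvd_card' (G := K) 2 (by rw [hK]; norm_num)
  obtain ⟨b, hb⟩ := exists_prime_orderOf_dvd_card' (G := K) 3 (by rw [hK]; norm_num)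
  have hsub : Finset.univ.filter (fun k : K => orderOf k = 2) ⊆ Finset.univ \ {1, b} := by
    intro k hk
    simp only [Finset.mem_filter, Finset.mem_univ, true_and] at hk
    simp only [Finset.mem_sdiff, Finset.mem_univ, Finset.mem_insert, Finset.mem_singleton,
      true_and, not_or]
    exact ⟨by rintro rfl; simp at hk, by rintro rfl; omega⟩
  have h1b : (1 : K) ≠ b := by rintro rfl; simp at hb
  have hle := Finset.card_le_card hsub
  rw [Finset.card_sdiff_of_subset (Finset.subset_univ _), Finset.card_univ,
    ← Nat.card_eq_fintype_card, hK, Finset.card_pair h1b] at hle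
  have hpos : 0 < (Finset.univ.filter fun k : K => orderOf k = 2).card :=
    Finset.card_pos.mpr ⟨a, by simpa using ha⟩
  rw [Nat.card_eq_fintype_card, Fintype.card_subtype]
  omega

theorem Sylow.normal_of_card_eq_132 {G : Type*} [Group G] [Finite G] (hG : Nat.card G = 132)
    (P : Sylow 11 G) : (P : Subgroup G).Normal := by
  have : Fact (Nat.Prime 11) := ⟨by norm_num⟩
  have hP : Nat.card P = 11 :=
    P.card_eq_of_dvd_of_not_sq_dvd (by rw [hG]; norm_num) (by rw [hG]; norm_num)
  have hidx : (P : Subgroup G).index = 11 + 1 := by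
    have := (P : Subgroup G).card_mul_index
    rw [hP, hG] at this
    omega
  rcases card_sylow_eq_one_or_eq_succ P hidx with h1 | h12
  · have : Subsingleton (Sylow 11 G) := (Nat.card_eq_one_iff_unique.mp h1).1
    exact P.normal_of_subsingleton
  exfalso
  have hN : normalizer (P : Set G) = P :=
    P.normalizer_eq_self_of_card_eq_index (h12.trans hidx.symm)
  have : IsCyclic P := isCyclic_of_prime_card hP
  have hNC : normalizer (P : Set G) ≤ centralizer (P : Set G) :=
    hN ▸ le_centralizer (P : Subgroup G)
  have hKP := MonoidHom.ker_transferSylow_isComplement' P hNC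
  set K := (MonoidHom.transferSylow P hNC).ker
  have hK : Nat.card K = 12 := by
    have := hKP.card_mul_card
    rw [hP, hG] at this
    omega
  obtain ⟨x, -, hx2, hxc⟩ := exists_orderOf_eq_mem_centralizer (K := K) P.isPGroup' 2
    (not_eleven_dvd_card_orderOf_eq_two hK)
  have hxP : x ∈ (P : Subgroup G) := hN ▸ centralizer_le_normalizer _ hxc
  have := (P : Subgroup G).orderOf_dvd_natCard hxP
  rw [hx2, hP] at this
  norm_num at this

theorem Subgroup.inf_eq_bot_of_card_eq_prime {G : Type*} [Group G] {p : ℕ} (hp : p.Prime)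
    {H K : Subgroup G} (hH : Nat.card H = p) (hK : Nat.card K = p) (hne : H ≠ K) :
    H ⊓ K = ⊥ := by
  have : Finite H := Nat.finite_of_card_ne_zero (hH ▸ hp.ne_zero)
  have : Finite K := Nat.finite_of_card_ne_zero (hK ▸ hp.ne_zero)
  rcases hp.eq_one_or_self_of_dvd _ (hH ▸ card_dvd_of_le inf_le_left) with h1 | hp'
  · exact card_eq_one.mp h1
  · have hle : H ≤ K := by
      have := eq_of_le_of_card_ge (inf_le_left (b := K)) (by rw [hH, hp'])
      exact this ▸ inf_le_right
    exact absurd (eq_of_le_of_card_ge hle (by rw [hH, hK])) hne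

theorem Sylow.injective_toPermHom {G : Type*} [Group G] [Finite G] {p : ℕ} [hp : Fact p.Prime]
    (hP : ∀ Q : Sylow p G, Nat.card Q = p ∧ normalizer (Q : Set G) = Q)
    (hn : 1 < Nat.card (Sylow p G)) : Function.Injective (MulAction.toPermHom G (Sylow p G)) := by
  rw [injective_iff_map_eq_one]
  intro g hg
  have hmem (Q : Sylow p G) : g ∈ (Q : Subgroup G) :=
    (hP Q).2 ▸ Sylow.smul_eq_iff_mem_normalizer.mp (DFunLike.congr_fun hg Q)
  have : Nontrivial (Sylow p G) := Finite.one_lt_card_iff_nontrivial.mp hn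
  obtain ⟨Q₁, Q₂, hne⟩ := exists_pair_ne (Sylow p G)
  have hbot :=
    inf_eq_bot_of_card_eq_prime hp.out (hP Q₁).1 (hP Q₂).1 fun h => hne (Sylow.ext h)
  have : g ∈ (Q₁ : Subgroup G) ⊓ Q₂ := ⟨hmem Q₁, hmem Q₂⟩
  rwa [hbot, mem_bot] at this

theorem nonempty_mulEquiv_alternatingGroup_of_injective {H α : Type*} [Group H] [Fintype α]
    [DecidableEq α] (f : H →* Equiv.Perm α) (hf : Function.Injective f)
    (hcard : 2 * Nat.card H = Nat.card (Equiv.Perm α)) :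
    Nonempty (H ≃* alternatingGroup α) := by
  have : Finite H := Finite.of_injective f hf
  have hrange : Nat.card f.range = Nat.card H :=
    (Nat.card_congr (MonoidHom.ofInjective hf).toEquiv).symm
  have hidx : f.range.index = 2 := by
    have := f.range.card_mul_index
    rw [hrange, ← hcard] at this
    have : 0 < Nat.card H := Nat.card_pos
    nlinarith
  exact ⟨(MonoidHom.ofInjective hf).trans
    (MulEquiv.subgroupCongr (Equiv.Perm.eq_alternatingGroup_of_index_eq_two hidx))⟩

theorem nonempty_mulEquiv_alternatingGroup_of_card_eq_twelve {H : Type*} [Group H] [Finite H]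
    (hH : Nat.card H = 12) (hns : ¬ IsSupersolvable H) :
    Nonempty (H ≃* alternatingGroup (Fin 4)) := by
  have : Fact (Nat.Prime 3) := ⟨by norm_num⟩
  have hcard (Q : Sylow 3 H) : Nat.card Q = 3 :=
    Q.card_eq_of_dvd_of_not_sq_dvd (by rw [hH]; norm_num) (by rw [hH]; norm_num)
  have hidx (Q : Sylow 3 H) : Q.index = 3 + 1 := by
    have := (Q : Subgroup H).card_mul_index
    rw [hcard, hH] at this
    omega
  obtain ⟨Q⟩ : Nonempty (Sylow 3 H) := inferInstance
  rcases card_sylow_eq_one_or_eq_succ Q (hidx Q) with h1 | h4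
  · have : Subsingleton (Sylow 3 H) := (Nat.card_eq_one_iff_unique.mp h1).1
    have := Q.normal_of_subsingleton
    have : IsCyclic Q := isCyclic_of_prime_card (hcard Q)
    refine absurd (IsSupersolvable.of_card_quotient_eq_prime_sq (p := 2) (Q : Subgroup H) ?_) hns
    have := card_eq_card_quotient_mul_card_subgroup (Q : Subgroup H)
    rw [hH, hcard] at this
    omega
  classical
  have : Fintype (Sylow 3 H) := Fintype.ofFinite _
  have hinj := Sylow.injective_toPermHom
    (fun Q => ⟨hcard Q, Q.normalizer_eq_self_of_card_eq_index (h4.trans (hidx Q).symm)⟩)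
    (by omega)
  obtain ⟨e⟩ := nonempty_mulEquiv_alternatingGroup_of_injective _ hinj
    (by rw [Nat.card_perm, h4, hH]; decide)
  exact ⟨e.trans (Equiv.altCongrHom (Finite.equivFinOfCardEq h4))⟩

theorem alternatingGroup.monoidHom_eq_one {α M : Type*} [Fintype α] [DecidableEq α] [Group M]
    (f : alternatingGroup α →* M) (hM : (Nat.card M).Coprime 3) : f = 1 := by
  suffices hker : f.ker = ⊤ from MonoidHom.ext fun σ => (hker ▸ mem_top σ : σ ∈ f.ker)
  rw [eq_top_iff, ← alternatingGroup.closure_isThreeCycles_eq_top, closure_le]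
  intro σ (hσ : (σ : Equiv.Perm α).IsThreeCycle)
  have h3 : orderOf (f σ) ∣ 3 := by
    rw [← hσ.orderOf, orderOf_coe]
    exact orderOf_map_dvd f σ
  exact orderOf_eq_one_iff.mp (Nat.eq_one_of_dvd_coprimes hM (orderOf_dvd_natCard _) h3)

theorem commute_of_mulEquiv_alternatingGroup {G α : Type*} [Group G] [Fintype α] [DecidableEq α]
    {N H : Subgroup G} [N.Normal] (e : H ≃* alternatingGroup α)
    (hN : (Nat.card (MulAut N)).Coprime 3) {x y : G} (hx : x ∈ N) (hy : y ∈ H) :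
    Commute x y := by
  have h1 := alternatingGroup.monoidHom_eq_one
    (((MulAut.conjNormal : G →* MulAut N).comp H.subtype).comp e.symm.toMonoidHom) hN
  have h2 : y * x * y⁻¹ = x := by
    simpa using congrArg (fun φ => ((φ (e ⟨y, hy⟩) ⟨x, hx⟩ : N) : G)) h1
  exact (mul_inv_eq_iff_eq_mul.mp h2).symm

theorem Subgroup.IsComplement'.nonempty_mulEquiv_prod {G : Type*} [Group G] {H K : Subgroup G}
    (h : H.IsComplement' K) (hc : ∀ x ∈ H, ∀ y ∈ K, Commute x y) :
    Nonempty (H × K ≃* G) :=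
  ⟨MulEquiv.ofBijective (H.subtype.noncommCoprod K.subtype fun x y => hc x x.2 y y.2) h⟩

/-- Every non-supersolvable group of order 132 is isomorphic to `C_11 × A_4`. -/
theorem nonSupersolvable_of_order_132 (G : Type*) [Group G] [Fintype G]
    (hG : Fintype.card G = 132) (hns : ¬ IsSupersolvable G) :
    Nonempty (G ≃* Multiplicative (ZMod 11) × alternatingGroup (Fin 4)) := by
  have : Fact (Nat.Prime 11) := ⟨by norm_num⟩
  have hG' : Nat.card G = 132 := Nat.card_eq_fintype_card.trans hG
  obtain ⟨P⟩ : Nonempty (Sylow 11 G) := inferInstance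
  have := P.normal_of_card_eq_132 hG'
  have hP : Nat.card P = 11 :=
    P.card_eq_of_dvd_of_not_sq_dvd (by rw [hG']; norm_num) (by rw [hG']; norm_num)
  have : IsCyclic P := isCyclic_of_prime_card hP
  obtain ⟨H, hPH⟩ := exists_right_complement'_of_coprime P.card_coprime_index
  have hH : Nat.card H = 12 := by
    have := hPH.card_mul_card
    rw [hP, hG'] at this
    omega
  obtain ⟨eA⟩ := nonempty_mulEquiv_alternatingGroup_of_card_eq_twelve hH fun hss =>
    hns (.of_quotient _ (.of_mulEquiv hPH.symm.QuotientMulEquiv hss))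
  have hAut : (Nat.card (MulAut P)).Coprime 3 := by
    rw [IsCyclic.card_mulAut, hP, Nat.totient_prime (by norm_num)]
    norm_num
  obtain ⟨e⟩ := hPH.nonempty_mulEquiv_prod fun x hx y hy =>
    commute_of_mulEquiv_alternatingGroup eA hAut hx hy
  exact ⟨e.symm.trans ((mulEquivOfPrimeCardEq hP (by simp)).prodCongr eA)⟩
end
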